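/- arXiv:0810.3670 — 2 statements merged into one kernel-verified Lean document; each statement's English description precedes it below -/
import Mathlib

section
/- The map Γ from unlabeled one-factor two-chain covers on n elements to pairs of non-hitting walks of length n, sending a cover with greedy pair (λ,δ) to the walks (V,W) defined by stepping up at time i iff λ_i∈A (respectively δ_i∈A), is a bijection. -/
open scoped Classical

/-- A two-chain cover on `[n]`: a (strict) partial order on `Fin n` whose ground set is
partitioned into two chains, `A` and its complement `B = Aᶜ`. -/
structure TwoChainCover (n : ℕ) where
  lt : Fin n → Fin n → Prop
  irrefl : ∀ x, ¬lt x x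
  trans : ∀ x y z, lt x y → lt y z → lt x z
  A : Finset (Fin n)
  chainA : ∀ x ∈ A, ∀ y ∈ A, x ≠ y → lt x y ∨ lt y x
  chainB : ∀ x y : Fin n, x ∉ A → y ∉ A → x ≠ y → lt x y ∨ lt y x

namespace TwoChainCover

variable {n : ℕ}

/-- The incomparability graph of a two-chain cover: `x ∼ y` iff `x ≠ y` and `x, y` are
incomparable in the partial order. -/
def incompGraph (C : TwoChainCover n) : SimpleGraph (Fin n) where
  Adj x y := x ≠ y ∧ ¬C.lt x y ∧ ¬C.lt y x
  symm := by constructor; intro x y h; exact ⟨h.1.symm, h.2.2, h.2.1⟩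
  loopless := by constructor; intro x h; exact h.1 rfl

/-- A two-chain cover has one factor if its incomparability graph is connected. -/
def OneFactor (C : TwoChainCover n) : Prop := C.incompGraph.Connected

/-- `(λ, δ)` is the greedy pair of linear orders of the cover `C`: both are linear
extensions of the partial order (here given as equivs `Fin n ≃ Fin n`, where `λ i` is the
element in position `i`, so that `λ.symm` records ranks), and every incomparable pair
`a ∈ A`, `b ∈ B` is resolved as `a` before `b` in `λ` and `b` before `a` in `δ`. -/
def GreedyPair (C : TwoChainCover n) (lam del : Fin n ≃ Fin n) : Prop :=
  (∀ x y, C.lt x y → lam.symm x < lam.symm y) ∧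
  (∀ x y, C.lt x y → del.symm x < del.symm y) ∧
  (∀ a ∈ C.A, ∀ b : Fin n, b ∉ C.A → ¬C.lt a b → ¬C.lt b a →
    lam.symm a < lam.symm b ∧ del.symm b < del.symm a)

/-- The walk associated with a linear order `e` (so `Γ(C) = (walk C λ, walk C δ)`): at
step `i + 1` the walk goes up if the element in position `i` lies in the chain `A`, and
down otherwise. -/
def walk (C : TwoChainCover n) (e : Fin n ≃ Fin n) : ℕ → ℤ := fun t =>
  ∑ i ∈ Finset.univ.filter (fun i : Fin n => (i : ℕ) < t),
    (if e i ∈ C.A then (1 : ℤ) else -1)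

/-- The incomparability window of `c`: the number of elements incomparable to `c`. -/
noncomputable def window (C : TwoChainCover n) (c : Fin n) : ℕ :=
  (Finset.univ.filter fun y : Fin n => y ≠ c ∧ ¬C.lt y c ∧ ¬C.lt c y).card

/-- `τ(c)`: the number of elements `y ⪯ c`. -/
noncomputable def tau (C : TwoChainCover n) (c : Fin n) : ℕ :=
  (Finset.univ.filter fun y : Fin n => C.lt y c ∨ y = c).card

/-- The rank of `a` within the chain `A` (so `a = a_i` with `i = rankA C a`). -/
noncomputable def rankA (C : TwoChainCover n) (a : Fin n) : ℕ :=
  (Finset.univ.filter fun y : Fin n => y ∈ C.A ∧ C.lt y a).card + 1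

/-- The rank of `b` within the chain `B = Aᶜ` (so `b = b_j` with `j = rankB C b`). -/
noncomputable def rankB (C : TwoChainCover n) (b : Fin n) : ℕ :=
  (Finset.univ.filter fun y : Fin n => y ∉ C.A ∧ C.lt y b).card + 1

/-- The first time the walk associated with `e` has taken `i` up-steps. -/
noncomputable def tUp (C : TwoChainCover n) (e : Fin n ≃ Fin n) (i : ℕ) : ℕ :=
  sInf {t : ℕ | i ≤ (Finset.univ.filter fun j : Fin n => (j : ℕ) < t ∧ e j ∈ C.A).card}

/-- The first time the walk associated with `e` has taken `j` down-steps. -/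
noncomputable def tDown (C : TwoChainCover n) (e : Fin n ≃ Fin n) (j : ℕ) : ℕ :=
  sInf {t : ℕ | j ≤ (Finset.univ.filter fun i : Fin n => (i : ℕ) < t ∧ e i ∉ C.A).card}

end TwoChainCover

/-- A pair of non-hitting walks of length `n` on the integers:
`V 0 = W 0 = 0`, all steps are `±1`, `V n = W n`, and `V t > W t` for `0 < t < n`. -/
def IsNonHitting (n : ℕ) (V W : ℕ → ℤ) : Prop :=
  V 0 = 0 ∧ W 0 = 0 ∧
    (∀ t < n, (V (t + 1) - V t = 1 ∨ V (t + 1) - V t = -1) ∧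
      (W (t + 1) - W t = 1 ∨ W (t + 1) - W t = -1)) ∧
    V n = W n ∧ (∀ t, 0 < t → t < n → W t < V t)

/-- Isomorphism of two-chain covers: a relabelling of the ground set preserving the
partial order and the two chains. -/
def CoverIso {n : ℕ} (C C' : TwoChainCover n) : Prop :=
  ∃ e : Fin n ≃ Fin n,
    (∀ x y, C.lt x y ↔ C'.lt (e x) (e y)) ∧ (∀ x, x ∈ C.A ↔ e x ∈ C'.A)


/-!
In a prefix of a linear extension the elements of either chain form an initial segment of
that chain, so the walk of `λ` or `δ` records how far each chain has advanced. If after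
`0 < t < n` steps `δ` had advanced at least as far as `λ` in `A`, it would have advanced at
most as far in `B`; by the greedy rules the first `t` elements of `λ` would then be closed
under incomparability, contradicting connectivity. Hence `Γ(C)` is non-hitting.

Conversely, label the `i`-th up-step of a walk by `i` and its `j`-th down-step by `p + j`,
where `p` is the number of up-steps. For a non-hitting pair `(V, W)` this gives two linear
orders of `[n]`, and their intersection is a two-chain cover with chains `[0, p)`, `[p, n)`
and greedy pair the two orders: `a_i` precedes `b_j` in the order of `V` iff `V` has more
than `i` up-steps among its first `i + j + 1`, so `W ≤ V` rules out the non-greedy pattern.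
The same description of the incomparable pairs links all elements.

Finally, a greedy pair realizes its cover, and the label of an element read off `λ` or off
`δ` as above is the same: its rank in its chain (shifted by `|A|` on `B`). So `Γ(C)` fixes
the position of every element in `λ` and in `δ`, hence `C` up to isomorphism. Conversely
the greedy pair is unique, so an isomorphism carries one greedy pair onto the other.
-/

open Finset

def IsUpStep (V : ℕ → ℤ) (s : ℕ) : Prop := V (s + 1) - V s = 1

noncomputable def upCount (V : ℕ → ℤ) (t : ℕ) : ℕ := Nat.count (IsUpStep V) t

noncomputable def downCount (V : ℕ → ℤ) (t : ℕ) : ℕ :=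
  Nat.count (fun s => ¬IsUpStep V s) t

section Steps

variable (V : ℕ → ℤ)

lemma upCount_succ (t : ℕ) :
    upCount V (t + 1) = upCount V t + if IsUpStep V t then 1 else 0 :=
  Nat.count_succ _ t

lemma downCount_succ (t : ℕ) :
    downCount V (t + 1) = downCount V t + if IsUpStep V t then 0 else 1 := by
  simp only [downCount, Nat.count_succ, ite_not]

lemma upCount_mono : Monotone (upCount V) := Nat.count_monotone _

lemma downCount_mono : Monotone (downCount V) := Nat.count_monotone _

lemma upCount_le_self (t : ℕ) : upCount V t ≤ t := Nat.count_le _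

lemma upCount_add_downCount (t : ℕ) : upCount V t + downCount V t = t := by
  induction t with
  | zero => simp [upCount, downCount]
  | succ t ih => rw [upCount_succ, downCount_succ]; split_ifs <;> omega

variable {V}

lemma upCount_lt_of_isUpStep {k l : ℕ} (hk : IsUpStep V k) (hkl : k < l) :
    upCount V k < upCount V l :=
  Nat.count_strict_mono hk hkl

lemma downCount_lt_of_not_isUpStep {k l : ℕ} (hk : ¬IsUpStep V k) (hkl : k < l) :
    downCount V k < downCount V l :=
  Nat.count_strict_mono (p := fun s => ¬IsUpStep V s) hk hkl

lemma eq_two_mul_upCount_sub {n : ℕ} (h0 : V 0 = 0)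
    (hstep : ∀ t < n, V (t + 1) - V t = 1 ∨ V (t + 1) - V t = -1) {t : ℕ} (ht : t ≤ n) :
    V t = 2 * upCount V t - t := by
  induction t with
  | zero => simp [h0, upCount]
  | succ t ih =>
    have := ih (by omega)
    rw [upCount_succ, IsUpStep]
    rcases hstep t (by omega) with h | h <;> simp [h] <;> omega

end Steps

namespace IsNonHitting

variable {n : ℕ} {V W : ℕ → ℤ} (h : IsNonHitting n V W)
include h

lemma eq_two_mul_upCount_sub_left {t : ℕ} (ht : t ≤ n) : V t = 2 * upCount V t - t :=
  eq_two_mul_upCount_sub h.1 (fun s hs => (h.2.2.1 s hs).1) ht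

lemma eq_two_mul_upCount_sub_right {t : ℕ} (ht : t ≤ n) : W t = 2 * upCount W t - t :=
  eq_two_mul_upCount_sub h.2.1 (fun s hs => (h.2.2.1 s hs).2) ht

lemma upCount_eq : upCount W n = upCount V n := by
  have := h.eq_two_mul_upCount_sub_left le_rfl
  have := h.eq_two_mul_upCount_sub_right le_rfl
  have := h.2.2.2.1
  omega

lemma upCount_lt {t : ℕ} (h0 : 0 < t) (ht : t < n) : upCount W t < upCount V t := by
  have := h.eq_two_mul_upCount_sub_left ht.le
  have := h.eq_two_mul_upCount_sub_right ht.le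
  have := h.2.2.2.2 t h0 ht
  omega

lemma upCount_le {t : ℕ} (ht : t ≤ n) : upCount W t ≤ upCount V t := by
  rcases Nat.eq_zero_or_pos t with rfl | h0
  · simp [upCount]
  rcases ht.lt_or_eq with ht | rfl
  exacts [(h.upCount_lt h0 ht).le, h.upCount_eq.le]

lemma isUpStep_last (hn : 2 ≤ n) : ¬IsUpStep V (n - 1) ∧ IsUpStep W (n - 1) := by
  have hlt := h.upCount_lt (t := n - 1) (by omega) (by omega)
  have heq := h.upCount_eq
  have hV := upCount_succ V (n - 1)
  have hW := upCount_succ W (n - 1)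
  rw [Nat.sub_add_cancel (by omega : 1 ≤ n)] at hV hW
  constructor
  · intro hup; rw [if_pos hup] at hV; split_ifs at hW <;> omega
  · by_contra hup; rw [if_neg hup] at hW; split_ifs at hV <;> omega

end IsNonHitting

section StepPerm

variable (n : ℕ) (U : ℕ → ℤ)

noncomputable def stepLabel (k : Fin n) : Fin n :=
  if hk : IsUpStep U k then
    ⟨upCount U k, (upCount_lt_of_isUpStep hk k.2).trans_le (upCount_le_self U n)⟩
  else ⟨upCount U n + downCount U k, by
    have := downCount_lt_of_not_isUpStep hk k.2
    have := upCount_add_downCount U n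
    omega⟩

lemma stepLabel_injective : Function.Injective (stepLabel n U) := by
  intro k k' hkk'
  unfold stepLabel at hkk'
  apply Fin.ext
  split_ifs at hkk' with hk hk' hk' <;> simp only [Fin.mk.injEq] at hkk'
  · exact Nat.count_injective hk hk' hkk'
  · have := upCount_lt_of_isUpStep hk k.2; omega
  · have := upCount_lt_of_isUpStep hk' k'.2; omega
  · exact Nat.count_injective (p := fun s => ¬IsUpStep U s) hk hk'
      (by simpa [downCount] using hkk')

noncomputable def stepPerm : Fin n ≃ Fin n :=
  Equiv.ofBijective _ (Finite.injective_iff_bijective.mp (stepLabel_injective n U))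

variable {n U}

lemma stepPerm_apply_of_isUpStep {k : Fin n} (hk : IsUpStep U k) :
    (stepPerm n U k : ℕ) = upCount U k := by
  simp [stepPerm, stepLabel, hk]

lemma stepPerm_apply_of_not_isUpStep {k : Fin n} (hk : ¬IsUpStep U k) :
    (stepPerm n U k : ℕ) = upCount U n + downCount U k := by
  simp [stepPerm, stepLabel, hk]

lemma stepPerm_apply_lt_iff (k : Fin n) :
    (stepPerm n U k : ℕ) < upCount U n ↔ IsUpStep U k := by
  by_cases hk : IsUpStep U k
  · simpa [stepPerm_apply_of_isUpStep hk, hk] using upCount_lt_of_isUpStep hk k.2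
  · simp [stepPerm_apply_of_not_isUpStep hk, hk]

variable {x y : Fin n}

lemma stepPerm_symm_of_lt_upCount (hx : (x : ℕ) < upCount U n) :
    IsUpStep U ((stepPerm n U).symm x) ∧ upCount U ((stepPerm n U).symm x) = x := by
  have hk := (stepPerm n U).apply_symm_apply x
  have hup : IsUpStep U ((stepPerm n U).symm x) := (stepPerm_apply_lt_iff _).mp (by rwa [hk])
  exact ⟨hup, by rw [← stepPerm_apply_of_isUpStep hup, hk]⟩

lemma stepPerm_symm_of_upCount_le (hx : upCount U n ≤ x) :
    ¬IsUpStep U ((stepPerm n U).symm x) ∧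
      downCount U ((stepPerm n U).symm x) = x - upCount U n := by
  have hk := (stepPerm n U).apply_symm_apply x
  have hdown : ¬IsUpStep U ((stepPerm n U).symm x) :=
    fun hup => absurd ((stepPerm_apply_lt_iff _).mpr hup) (by rw [hk]; omega)
  refine ⟨hdown, ?_⟩
  have := stepPerm_apply_of_not_isUpStep hdown
  rw [hk] at this
  omega

lemma stepPerm_symm_lt_iff_of_lt_upCount (hx : (x : ℕ) < upCount U n) (s : ℕ) :
    ((stepPerm n U).symm x : ℕ) < s ↔ (x : ℕ) < upCount U s := by
  obtain ⟨hup, hcount⟩ := stepPerm_symm_of_lt_upCount hx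
  constructor
  · intro hs
    exact hcount ▸ upCount_lt_of_isUpStep hup hs
  · intro hs
    by_contra! hle
    have := upCount_mono U hle
    omega

lemma stepPerm_symm_lt_iff_of_upCount_le (hx : upCount U n ≤ x) (s : ℕ) :
    ((stepPerm n U).symm x : ℕ) < s ↔ (x : ℕ) - upCount U n < downCount U s := by
  obtain ⟨hdown, hcount⟩ := stepPerm_symm_of_upCount_le hx
  constructor
  · intro hs
    exact hcount ▸ downCount_lt_of_not_isUpStep hdown hs
  · intro hs
    by_contra! hle
    have := downCount_mono U hle
    omega

lemma stepPerm_symm_lt_symm_of_lt_upCount (hy : (y : ℕ) < upCount U n) (hxy : x < y) :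
    (stepPerm n U).symm x < (stepPerm n U).symm y := by
  rw [Fin.lt_def, stepPerm_symm_lt_iff_of_lt_upCount ((Fin.lt_def.mp hxy).trans hy),
    (stepPerm_symm_of_lt_upCount hy).2]
  exact hxy

lemma stepPerm_symm_lt_symm_of_upCount_le (hx : upCount U n ≤ x) (hxy : x < y) :
    (stepPerm n U).symm x < (stepPerm n U).symm y := by
  rw [Fin.lt_def, stepPerm_symm_lt_iff_of_upCount_le hx,
    (stepPerm_symm_of_upCount_le (hx.trans (Fin.le_def.mp hxy.le))).2]
  omega

lemma stepPerm_symm_lt_symm_iff (hx : (x : ℕ) < upCount U n) (hy : upCount U n ≤ y) :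
    (stepPerm n U).symm x < (stepPerm n U).symm y ↔
      (x : ℕ) < upCount U (x + (y - upCount U n) + 1) := by
  -- exactly one of `x` and `y` lies among the first `s` positions
  set s := (x : ℕ) + (y - upCount U n) + 1
  have hxs := stepPerm_symm_lt_iff_of_lt_upCount hx s
  have hys := stepPerm_symm_lt_iff_of_upCount_le hy s
  have := upCount_add_downCount U s
  rw [Fin.lt_def, ← hxs]
  omega

end StepPerm

def prefixSet {n : ℕ} (e : Fin n ≃ Fin n) (t : ℕ) : Finset (Fin n) :=
  {x | (e.symm x : ℕ) < t}

section PrefixSet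

variable {n : ℕ} {e : Fin n ≃ Fin n} {t : ℕ}

lemma mem_prefixSet {x : Fin n} : x ∈ prefixSet e t ↔ (e.symm x : ℕ) < t := by
  simp [prefixSet]

lemma prefixSet_succ (ht : t < n) :
    prefixSet e (t + 1) = insert (e ⟨t, ht⟩) (prefixSet e t) := by
  ext x
  simp only [mem_insert, mem_prefixSet, ← Equiv.symm_apply_eq, Fin.ext_iff]
  omega

lemma card_prefixSet_succ_inter (P : Finset (Fin n)) (ht : t < n) :
    #(prefixSet e (t + 1) ∩ P) =
      #(prefixSet e t ∩ P) + if e ⟨t, ht⟩ ∈ P then 1 else 0 := by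
  rw [prefixSet_succ ht]
  split_ifs with h
  · rw [insert_inter_of_mem h, card_insert_of_notMem (by simp [mem_prefixSet])]
  · rw [insert_inter_of_notMem h, add_zero]

lemma card_prefixSet (ht : t ≤ n) : #(prefixSet e t) = t := by
  induction t with
  | zero => simp [prefixSet]
  | succ t ih =>
    have := card_prefixSet_succ_inter (e := e) univ (by omega : t < n)
    simp only [inter_univ, mem_univ, if_true] at this
    rw [this, ih (by omega)]

lemma prefixSet_self (e : Fin n ≃ Fin n) : prefixSet e n = univ := by
  ext x
  simp [mem_prefixSet]

lemma card_prefixSet_inter_add_card_inter_compl (P : Finset (Fin n)) (ht : t ≤ n) :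
    #(prefixSet e t ∩ P) + #(prefixSet e t ∩ Pᶜ) = t := by
  rw [← sdiff_eq_inter_compl, card_inter_add_card_sdiff, card_prefixSet ht]

end PrefixSet

namespace TwoChainCover

variable {n : ℕ} (C : TwoChainCover n)

def IsLinExt (e : Fin n ≃ Fin n) : Prop := ∀ x y, C.lt x y → e.symm x < e.symm y

lemma isChain_A : IsChain C.lt (C.A : Set (Fin n)) :=
  fun x hx y hy hxy => C.chainA x hx y hy hxy

lemma isChain_compl_A : IsChain C.lt (↑C.Aᶜ : Set (Fin n)) :=
  fun x hx y hy hxy => C.chainB x y (by simpa using hx) (by simpa using hy) hxy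

variable {C} in
lemma mem_A_iff_of_adj {x y : Fin n} (hxy : C.incompGraph.Adj x y) : y ∈ C.A ↔ x ∉ C.A := by
  obtain ⟨hne, hxy, hyx⟩ := hxy
  constructor
  · intro hy hx
    rcases C.chainA x hx y hy hne with h | h
    exacts [hxy h, hyx h]
  · intro hx
    by_contra hy
    rcases C.chainB x y hx hy hne with h | h
    exacts [hxy h, hyx h]

lemma walk_zero (e : Fin n ≃ Fin n) : C.walk e 0 = 0 := by
  simp [walk]

lemma walk_succ (e : Fin n ≃ Fin n) {t : ℕ} (ht : t < n) :
    C.walk e (t + 1) = C.walk e t + if e ⟨t, ht⟩ ∈ C.A then 1 else -1 := by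
  have hfilter : univ.filter (fun i : Fin n => (i : ℕ) < t + 1) =
      insert ⟨t, ht⟩ (univ.filter fun i : Fin n => (i : ℕ) < t) := by
    ext i
    simp only [mem_filter, mem_univ, true_and, mem_insert, Fin.ext_iff]
    omega
  rw [walk, walk, hfilter, sum_insert (by simp), add_comm]

lemma walk_step (e : Fin n ≃ Fin n) :
    ∀ t < n, C.walk e (t + 1) - C.walk e t = 1 ∨ C.walk e (t + 1) - C.walk e t = -1 := by
  intro t ht
  rw [walk_succ C e ht]
  split_ifs <;> simp

lemma isUpStep_walk_iff (e : Fin n ≃ Fin n) {t : ℕ} (ht : t < n) :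
    IsUpStep (C.walk e) t ↔ e ⟨t, ht⟩ ∈ C.A := by
  rw [IsUpStep, walk_succ C e ht]
  split_ifs with h <;> simp [h]

lemma upCount_walk (e : Fin n ≃ Fin n) {t : ℕ} (ht : t ≤ n) :
    upCount (C.walk e) t = #(prefixSet e t ∩ C.A) := by
  induction t with
  | zero => simp [upCount, prefixSet]
  | succ t ih =>
    rw [upCount_succ, card_prefixSet_succ_inter _ (by omega), ih (by omega),
      if_congr (C.isUpStep_walk_iff e (by omega)) rfl rfl]

lemma downCount_walk (e : Fin n ≃ Fin n) {t : ℕ} (ht : t ≤ n) :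
    downCount (C.walk e) t = #(prefixSet e t ∩ C.Aᶜ) := by
  have := upCount_add_downCount (C.walk e) t
  have := card_prefixSet_inter_add_card_inter_compl (e := e) C.A ht
  rw [C.upCount_walk e ht] at *
  omega

lemma walk_eq_two_mul_card_sub (e : Fin n ≃ Fin n) {t : ℕ} (ht : t ≤ n) :
    C.walk e t = 2 * #(prefixSet e t ∩ C.A) - t := by
  rw [eq_two_mul_upCount_sub (C.walk_zero e) (C.walk_step e) ht, C.upCount_walk e ht]

lemma walk_eq_of_forall_mem_iff {e : Fin n ≃ Fin n} {U : ℕ → ℤ} (h0 : U 0 = 0)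
    (hstep : ∀ t < n, U (t + 1) - U t = 1 ∨ U (t + 1) - U t = -1)
    (hA : ∀ k : Fin n, e k ∈ C.A ↔ IsUpStep U k) {t : ℕ} (ht : t ≤ n) :
    C.walk e t = U t := by
  induction t with
  | zero => rw [walk_zero, h0]
  | succ t ih =>
    rw [walk_succ C e (by omega), ih (by omega)]
    have := hA ⟨t, by omega⟩
    rcases hstep t (by omega) with h | h <;> simp_all [IsUpStep] <;> linarith

variable {C}

lemma prefixSet_inter_subset_of_card_le {P : Finset (Fin n)} (hP : IsChain C.lt (P : Set (Fin n)))
    {e e' : Fin n ≃ Fin n} (he : C.IsLinExt e) (he' : C.IsLinExt e') {t t' : ℕ}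
    (hcard : #(prefixSet e t ∩ P) ≤ #(prefixSet e' t' ∩ P)) :
    prefixSet e t ∩ P ⊆ prefixSet e' t' ∩ P := by
  intro x hx
  by_contra hx'
  have hsub : prefixSet e' t' ∩ P ⊆ (prefixSet e t ∩ P).erase x := by
    intro z hz
    have hzx : z ≠ x := by rintro rfl; exact hx' hz
    simp only [mem_inter, mem_prefixSet, mem_erase] at hx hz ⊢
    refine ⟨hzx, ?_, hz.2⟩
    rcases hP hz.2 hx.2 hzx with h | h
    · exact (Fin.lt_def.mp (he z x h)).trans hx.1
    · exact absurd (mem_inter.mpr ⟨mem_prefixSet.mpr ((Fin.lt_def.mp (he' x z h)).trans hz.1),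
        hx.2⟩) hx'
  have := card_le_card hsub
  rw [card_erase_of_mem hx] at this
  have := card_pos.mpr ⟨x, hx⟩
  omega

namespace GreedyPair

variable {lam del : Fin n ≃ Fin n} (hg : C.GreedyPair lam del)
include hg

lemma isLinExt_lam : C.IsLinExt lam := hg.1

lemma isLinExt_del : C.IsLinExt del := hg.2.1

lemma symm_lt_of_adj {a b : Fin n} (hab : C.incompGraph.Adj a b) (ha : a ∈ C.A) :
    lam.symm a < lam.symm b ∧ del.symm b < del.symm a :=
  hg.2.2 a ha b ((mem_A_iff_of_adj hab).not_left.mpr ha) hab.2.1 hab.2.2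

lemma lt_iff {x y : Fin n} : C.lt x y ↔ lam.symm x < lam.symm y ∧ del.symm x < del.symm y := by
  refine ⟨fun h => ⟨hg.1 x y h, hg.2.1 x y h⟩, fun ⟨hl, hd⟩ => ?_⟩
  by_contra hxy
  by_cases hyx : C.lt y x
  · exact (hg.1 y x hyx).asymm hl
  have hadj : C.incompGraph.Adj x y := ⟨fun h => (h ▸ hl).false, hxy, hyx⟩
  by_cases hx : x ∈ C.A
  · exact (hg.symm_lt_of_adj hadj hx).2.asymm hd
  · exact (hg.symm_lt_of_adj hadj.symm ((mem_A_iff_of_adj hadj).mpr hx)).1.asymm hl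

lemma card_prefixSet_inter_lt (hC : C.OneFactor) {t : ℕ} (h0 : 0 < t) (ht : t < n) :
    #(prefixSet del t ∩ C.A) < #(prefixSet lam t ∩ C.A) := by
  by_contra! hle
  have hA := prefixSet_inter_subset_of_card_le C.isChain_A hg.isLinExt_lam hg.isLinExt_del hle
  have hB := prefixSet_inter_subset_of_card_le C.isChain_compl_A hg.isLinExt_del hg.isLinExt_lam
    (t := t) (t' := t) (by
      have := card_prefixSet_inter_add_card_inter_compl (e := lam) C.A ht.le
      have := card_prefixSet_inter_add_card_inter_compl (e := del) C.A ht.le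
      omega)
  obtain ⟨u, hu⟩ : (prefixSet lam t).Nonempty := by
    rw [← card_pos, card_prefixSet ht.le]; exact h0
  obtain ⟨v, hv⟩ : ∃ v, v ∉ prefixSet lam t := by
    by_contra! hall
    have := card_le_card (fun x _ => hall x : univ ⊆ prefixSet lam t)
    rw [card_univ, Fintype.card_fin, card_prefixSet ht.le] at this
    omega
  obtain ⟨d, -, hd₁, hd₂⟩ :=
    (hC.preconnected u v).some.exists_boundary_dart (prefixSet lam t : Set (Fin n)) hu hv
  simp only [mem_coe, mem_prefixSet] at hd₁ hd₂
  by_cases hA₁ : d.fst ∈ C.A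
  · have hdel := (hg.symm_lt_of_adj d.adj hA₁).2
    have hfst := hA (mem_inter.mpr ⟨mem_prefixSet.mpr hd₁, hA₁⟩)
    rw [mem_inter, mem_prefixSet] at hfst
    have hsnd := hB (mem_inter.mpr ⟨mem_prefixSet.mpr ((Fin.lt_def.mp hdel).trans hfst.1),
      mem_compl.mpr ((mem_A_iff_of_adj d.adj).not_left.mpr hA₁)⟩)
    exact hd₂ (mem_prefixSet.mp (mem_inter.mp hsnd).1)
  · have hlam := (hg.symm_lt_of_adj d.adj.symm ((mem_A_iff_of_adj d.adj).mpr hA₁)).1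
    exact hd₂ ((Fin.lt_def.mp hlam).trans hd₁)

lemma isNonHitting_walk (hC : C.OneFactor) : IsNonHitting n (C.walk lam) (C.walk del) := by
  refine ⟨C.walk_zero lam, C.walk_zero del,
    fun t ht => ⟨C.walk_step lam t ht, C.walk_step del t ht⟩, ?_, fun t h0 ht => ?_⟩
  · rw [C.walk_eq_two_mul_card_sub lam le_rfl, C.walk_eq_two_mul_card_sub del le_rfl,
      prefixSet_self, prefixSet_self]
  · rw [C.walk_eq_two_mul_card_sub lam ht.le, C.walk_eq_two_mul_card_sub del ht.le]
    have := hg.card_prefixSet_inter_lt hC h0 ht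
    omega

end GreedyPair

end TwoChainCover

lemma equiv_eq_of_extends_total {n : ℕ} {r : Fin n → Fin n → Prop}
    (hr : ∀ x y, x ≠ y → r x y ∨ r y x) {e e' : Fin n ≃ Fin n}
    (he : ∀ x y, r x y → e.symm x < e.symm y) (he' : ∀ x y, r x y → e'.symm x < e'.symm y) :
    e = e' := by
  have hlt : ∀ x y, e.symm x < e.symm y → e'.symm x < e'.symm y := by
    intro x y h
    rcases hr x y (by rintro rfl; exact h.false) with hxy | hyx
    exacts [he' x y hxy, absurd (he y x hyx) h.asymm]
  have hmono : StrictMono fun k => e'.symm (e k) :=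
    fun k k' hkk' => hlt _ _ (by simpa using hkk')
  exact Equiv.ext fun k => by simpa using congrArg e' (congrFun hmono.eq_id k)

namespace TwoChainCover

variable {n : ℕ} {C : TwoChainCover n}

variable (C) in
def greedyRel (S : Finset (Fin n)) (x y : Fin n) : Prop :=
  C.lt x y ∨ (x ∈ S ∧ y ∉ S ∧ ¬C.lt y x)

lemma greedyRel_total {S : Finset (Fin n)}
    (hS : ∀ x y, C.incompGraph.Adj x y → (y ∈ S ↔ x ∉ S)) (x y : Fin n) (hxy : x ≠ y) :
    C.greedyRel S x y ∨ C.greedyRel S y x := by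
  by_cases hlt : C.lt x y
  · exact Or.inl (Or.inl hlt)
  by_cases hgt : C.lt y x
  · exact Or.inr (Or.inl hgt)
  by_cases hx : x ∈ S
  · exact Or.inl (Or.inr ⟨hx, (hS x y ⟨hxy, hlt, hgt⟩).not_left.mpr hx, hgt⟩)
  · exact Or.inr (Or.inr ⟨(hS x y ⟨hxy, hlt, hgt⟩).mpr hx, hx, hlt⟩)

namespace GreedyPair

variable {lam del : Fin n ≃ Fin n} (hg : C.GreedyPair lam del)
include hg

lemma lam_extends_greedyRel (x y : Fin n) (h : C.greedyRel C.A x y) :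
    lam.symm x < lam.symm y := by
  by_cases hlt : C.lt x y
  · exact hg.1 x y hlt
  obtain _ | ⟨hx, hy, hyx⟩ := h
  · contradiction
  · exact (hg.2.2 x hx y hy hlt hyx).1

lemma del_extends_greedyRel (x y : Fin n) (h : C.greedyRel C.Aᶜ x y) :
    del.symm x < del.symm y := by
  by_cases hlt : C.lt x y
  · exact hg.2.1 x y hlt
  obtain _ | ⟨hx, hy, hyx⟩ := h
  · contradiction
  · exact (hg.2.2 y (by simpa using hy) x (by simpa using hx) hyx hlt).2

lemma unique {lam' del' : Fin n ≃ Fin n} (hg' : C.GreedyPair lam' del') :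
    lam = lam' ∧ del = del' :=
  ⟨equiv_eq_of_extends_total (greedyRel_total fun _ _ => mem_A_iff_of_adj)
      hg.lam_extends_greedyRel hg'.lam_extends_greedyRel,
    equiv_eq_of_extends_total
      (greedyRel_total fun _ _ hxy => by simpa using (mem_A_iff_of_adj hxy).not)
      hg.del_extends_greedyRel hg'.del_extends_greedyRel⟩

end GreedyPair

lemma GreedyPair.of_coverIso {C' : TwoChainCover n} {e : Fin n ≃ Fin n}
    (hlt : ∀ x y, C.lt x y ↔ C'.lt (e x) (e y)) (hA : ∀ x, x ∈ C.A ↔ e x ∈ C'.A)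
    {lam del : Fin n ≃ Fin n} (hg : C'.GreedyPair lam del) :
    C.GreedyPair (lam.trans e.symm) (del.trans e.symm) := by
  refine ⟨fun x y h => ?_, fun x y h => ?_, fun a ha b hb hab hba => ?_⟩
  · simpa using hg.1 _ _ ((hlt x y).mp h)
  · simpa using hg.2.1 _ _ ((hlt x y).mp h)
  · simpa using hg.2.2 (e a) ((hA a).mp ha) (e b) (by rwa [← hA]) (by rwa [← hlt])
      (by rwa [← hlt])

lemma walk_eq_walk_of_forall_mem_iff {C' : TwoChainCover n} {e e' : Fin n ≃ Fin n}
    (h : ∀ k, e k ∈ C.A ↔ e' k ∈ C'.A) : C.walk e = C'.walk e' := by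
  funext t
  exact sum_congr rfl fun k _ => if_congr (h k) rfl rfl

lemma walk_eq_walk_of_coverIso {C' : TwoChainCover n} {lam del lam' del' : Fin n ≃ Fin n}
    (hg : C.GreedyPair lam del) (hg' : C'.GreedyPair lam' del') (hiso : CoverIso C C') :
    C.walk lam = C'.walk lam' ∧ C.walk del = C'.walk del' := by
  obtain ⟨e, hlt, hA⟩ := hiso
  obtain ⟨rfl, rfl⟩ := hg.unique (GreedyPair.of_coverIso hlt hA hg')
  exact ⟨walk_eq_walk_of_forall_mem_iff fun k => by simp [hA],
    walk_eq_walk_of_forall_mem_iff fun k => by simp [hA]⟩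

lemma prefixSet_symm_inter {e : Fin n ≃ Fin n} (he : C.IsLinExt e) {P : Finset (Fin n)}
    (hP : IsChain C.lt (P : Set (Fin n))) {x : Fin n} (hx : x ∈ P) :
    prefixSet e (e.symm x) ∩ P = P.filter (C.lt · x) := by
  ext z
  simp only [mem_inter, mem_prefixSet, mem_filter]
  constructor
  · rintro ⟨hzx, hz⟩
    refine ⟨hz, ?_⟩
    rcases hP hz hx (by rintro rfl; exact lt_irrefl _ hzx) with h | h
    · exact h
    · exact absurd (Fin.lt_def.mp (he x z h)) (by omega)
  · rintro ⟨hz, h⟩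
    exact ⟨Fin.lt_def.mp (he z x h), hz⟩

lemma stepPerm_walk_symm_apply {e : Fin n ≃ Fin n} (he : C.IsLinExt e) (x : Fin n) :
    (stepPerm n (C.walk e) (e.symm x) : ℕ) =
      if x ∈ C.A then #(C.A.filter (C.lt · x)) else #C.A + #(C.Aᶜ.filter (C.lt · x)) := by
  have hup := C.isUpStep_walk_iff e (e.symm x).2
  simp only [Fin.eta, Equiv.apply_symm_apply] at hup
  split_ifs with hx
  · rw [stepPerm_apply_of_isUpStep (hup.mpr hx), C.upCount_walk e (e.symm x).2.le,
      prefixSet_symm_inter he C.isChain_A hx]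
  · rw [stepPerm_apply_of_not_isUpStep (hup.not.mpr hx), C.upCount_walk e le_rfl,
      C.downCount_walk e (e.symm x).2.le, prefixSet_self, univ_inter,
      prefixSet_symm_inter he C.isChain_compl_A (mem_compl.mpr hx)]

lemma GreedyPair.stepPerm_walk_symm {lam del : Fin n ≃ Fin n} (hg : C.GreedyPair lam del)
    (x : Fin n) : stepPerm n (C.walk del) (del.symm x) = stepPerm n (C.walk lam) (lam.symm x) :=
  Fin.ext (by
    rw [stepPerm_walk_symm_apply hg.isLinExt_del, stepPerm_walk_symm_apply hg.isLinExt_lam])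

lemma coverIso_of_walk_eq {C' : TwoChainCover n} {lam del lam' del' : Fin n ≃ Fin n}
    (hg : C.GreedyPair lam del) (hg' : C'.GreedyPair lam' del')
    (hlam : C.walk lam = C'.walk lam') (hdel : C.walk del = C'.walk del') : CoverIso C C' := by
  have hpos : ∀ k, del'.symm (lam' k) = del.symm (lam k) := fun k =>
    (stepPerm n (C.walk del)).injective (by
      rw [hg.stepPerm_walk_symm, hdel, hg'.stepPerm_walk_symm, hlam]
      simp)
  refine ⟨lam.symm.trans lam', fun x y => ?_, fun x => ?_⟩
  · rw [hg.lt_iff, hg'.lt_iff]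
    simp [hpos]
  · have h := C.isUpStep_walk_iff lam (lam.symm x).2
    rw [hlam, C'.isUpStep_walk_iff lam' (lam.symm x).2] at h
    simpa using h.symm

end TwoChainCover

noncomputable def canonicalCover (n : ℕ) (V W : ℕ → ℤ) (hVW : upCount W n = upCount V n) :
    TwoChainCover n where
  lt x y := (stepPerm n V).symm x < (stepPerm n V).symm y ∧
    (stepPerm n W).symm x < (stepPerm n W).symm y
  irrefl _ h := lt_irrefl _ h.1
  trans _ _ _ hxy hyz := ⟨hxy.1.trans hyz.1, hxy.2.trans hyz.2⟩
  A := {x | (x : ℕ) < upCount V n}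
  chainA x hx y hy hxy := by
    simp only [mem_filter, mem_univ, true_and] at hx hy
    rcases lt_or_gt_of_ne hxy with h | h
    · exact Or.inl ⟨stepPerm_symm_lt_symm_of_lt_upCount hy h,
        stepPerm_symm_lt_symm_of_lt_upCount (hVW ▸ hy) h⟩
    · exact Or.inr ⟨stepPerm_symm_lt_symm_of_lt_upCount hx h,
        stepPerm_symm_lt_symm_of_lt_upCount (hVW ▸ hx) h⟩
  chainB x y hx hy hxy := by
    simp only [mem_filter, mem_univ, true_and, not_lt] at hx hy
    rcases lt_or_gt_of_ne hxy with h | h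
    · exact Or.inl ⟨stepPerm_symm_lt_symm_of_upCount_le hx h,
        stepPerm_symm_lt_symm_of_upCount_le (hVW ▸ hx) h⟩
    · exact Or.inr ⟨stepPerm_symm_lt_symm_of_upCount_le hy h,
        stepPerm_symm_lt_symm_of_upCount_le (hVW ▸ hy) h⟩

namespace IsNonHitting

variable {n : ℕ} {V W : ℕ → ℤ} (h : IsNonHitting n V W)
include h

lemma mem_canonicalCover_A {x : Fin n} :
    x ∈ (canonicalCover n V W h.upCount_eq).A ↔ (x : ℕ) < upCount V n := by
  simp [canonicalCover]

lemma walk_canonicalCover {t : ℕ} (ht : t ≤ n) :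
    (canonicalCover n V W h.upCount_eq).walk (stepPerm n V) t = V t ∧
      (canonicalCover n V W h.upCount_eq).walk (stepPerm n W) t = W t :=
  ⟨TwoChainCover.walk_eq_of_forall_mem_iff _ h.1 (fun s hs => (h.2.2.1 s hs).1)
      (fun k => by rw [h.mem_canonicalCover_A, stepPerm_apply_lt_iff]) ht,
    TwoChainCover.walk_eq_of_forall_mem_iff _ h.2.1 (fun s hs => (h.2.2.1 s hs).2)
      (fun k => by rw [h.mem_canonicalCover_A, ← h.upCount_eq, stepPerm_apply_lt_iff]) ht⟩

lemma greedyPair_canonicalCover :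
    (canonicalCover n V W h.upCount_eq).GreedyPair (stepPerm n V) (stepPerm n W) := by
  refine ⟨fun _ _ hxy => hxy.1, fun _ _ hxy => hxy.2, fun a ha b hb hab hba => ?_⟩
  rw [h.mem_canonicalCover_A] at ha hb
  rw [not_lt] at hb
  have hV := stepPerm_symm_lt_symm_iff (U := V) ha hb
  have hW := stepPerm_symm_lt_symm_iff (U := W) (h.upCount_eq ▸ ha) (h.upCount_eq ▸ hb)
  rw [h.upCount_eq] at hW
  have hle := h.upCount_le (t := a + (b - upCount V n) + 1) (by omega)
  have hab' : a ≠ b := by rintro rfl; omega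
  have hW' : (stepPerm n W).symm b < (stepPerm n W).symm a :=
    lt_of_le_of_ne (not_lt.mp fun hW' => hab ⟨hV.mpr ((hW.mp hW').trans_le hle), hW'⟩)
      ((stepPerm n W).symm.injective.ne hab'.symm)
  refine ⟨?_, hW'⟩
  by_contra hV'
  exact hba ⟨lt_of_le_of_ne (not_lt.mp hV') ((stepPerm n V).symm.injective.ne hab'.symm), hW'⟩

lemma adj_canonicalCover {x y : Fin n} {s : ℕ} (hx : (x : ℕ) < upCount V n)
    (hy : upCount V n ≤ y) (hs : x + y + 1 = s + upCount V n) (hW : upCount W s ≤ x)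
    (hV : (x : ℕ) < upCount V s) :
    (canonicalCover n V W h.upCount_eq).incompGraph.Adj x y := by
  obtain rfl : s = x + (y - upCount V n) + 1 := by omega
  have hlam := (stepPerm_symm_lt_symm_iff hx hy).mpr hV
  have hdel :=
    (stepPerm_symm_lt_symm_iff (U := W) (h.upCount_eq ▸ hx) (h.upCount_eq ▸ hy)).not.mpr
      (by rw [h.upCount_eq]; omega)
  exact ⟨by rintro rfl; omega, fun hxy => hdel hxy.2, fun hyx => hyx.1.asymm hlam⟩

lemma exists_common_adj_of_lt_upCount (hn : 2 ≤ n) {x x' : Fin n} (hx' : (x' : ℕ) < upCount V n)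
    (hxx' : (x' : ℕ) = x + 1) :
    ∃ y, (canonicalCover n V W h.upCount_eq).incompGraph.Adj x y ∧
      (canonicalCover n V W h.upCount_eq).incompGraph.Adj x' y := by
  -- `T` is the time of the up-step of `V` labelled `x'`
  obtain ⟨hup, hcount⟩ := stepPerm_symm_of_lt_upCount hx'
  generalize hT : ((stepPerm n V).symm x' : ℕ) = T at hup hcount
  have hTn : T < n := hT ▸ ((stepPerm n V).symm x').2
  have hlast : T + 1 < n := by
    by_contra hTn'
    exact (h.isUpStep_last hn).1 (by rwa [show n - 1 = T by omega])
  have hdown : downCount V T < downCount V n := by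
    have := downCount_succ V (n - 1)
    rw [if_neg (h.isUpStep_last hn).1, Nat.sub_add_cancel (by omega)] at this
    have := downCount_mono V (show T ≤ n - 1 by omega)
    omega
  have := upCount_add_downCount V T
  have := upCount_add_downCount V n
  have hsucc := upCount_succ V T
  rw [if_pos hup] at hsucc
  have h1 := h.upCount_lt (t := T) (by omega) hTn
  have h2 := h.upCount_lt (t := T + 1) (by omega) hlast
  refine ⟨⟨upCount V n + downCount V T, by omega⟩,
    h.adj_canonicalCover (s := T) ?_ ?_ ?_ ?_ ?_,
    h.adj_canonicalCover (s := T + 1) ?_ ?_ ?_ ?_ ?_⟩ <;> (try dsimp only) <;> omega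

lemma exists_common_adj_of_upCount_le (hn : 2 ≤ n) {y y' : Fin n} (hy : upCount V n ≤ y)
    (hyy' : (y' : ℕ) = y + 1) :
    ∃ x, (canonicalCover n V W h.upCount_eq).incompGraph.Adj x y ∧
      (canonicalCover n V W h.upCount_eq).incompGraph.Adj x y' := by
  -- `T` is the time of the down-step of `W` labelled `y'`
  obtain ⟨hdown, hcount⟩ :=
    stepPerm_symm_of_upCount_le (U := W) (x := y') (by rw [h.upCount_eq]; omega)
  generalize hT : ((stepPerm n W).symm y' : ℕ) = T at hdown hcount
  have hTn : T < n := hT ▸ ((stepPerm n W).symm y').2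
  rw [h.upCount_eq] at hcount
  have hlast : T + 1 < n := by
    by_contra hTn'
    exact hdown (by rw [show T = n - 1 by omega]; exact (h.isUpStep_last hn).2)
  have := upCount_add_downCount W T
  have := upCount_mono V hTn.le
  have hsucc := upCount_succ W T
  rw [if_neg hdown] at hsucc
  have h1 := h.upCount_lt (t := T) (by omega) hTn
  have h2 := h.upCount_lt (t := T + 1) (by omega) hlast
  refine ⟨⟨upCount W T, by omega⟩, h.adj_canonicalCover (s := T) ?_ ?_ ?_ ?_ ?_,
    h.adj_canonicalCover (s := T + 1) ?_ ?_ ?_ ?_ ?_⟩ <;> (try dsimp only) <;> omega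

lemma reachable_of_lt_upCount (hn : 2 ≤ n) (x : Fin n) (hx : (x : ℕ) < upCount V n) :
    (canonicalCover n V W h.upCount_eq).incompGraph.Reachable ⟨0, by omega⟩ x := by
  obtain ⟨i, hi⟩ := x
  induction i with
  | zero => rfl
  | succ i ih =>
    obtain ⟨y, hy, hy'⟩ := h.exists_common_adj_of_lt_upCount hn (x := ⟨i, by omega⟩) hx rfl
    exact (ih (by omega) (by dsimp only at hx ⊢; omega)).trans
      (hy.reachable.trans hy'.reachable.symm)

lemma reachable_of_upCount_le (hn : 2 ≤ n) (x : Fin n) (hx : upCount V n ≤ x) :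
    (canonicalCover n V W h.upCount_eq).incompGraph.Reachable ⟨0, by omega⟩ x := by
  have h1 := h.upCount_lt (t := 1) one_pos hn
  have := upCount_le_self V 1
  have := upCount_mono V (show 1 ≤ n by omega)
  obtain ⟨k, hk⟩ := x
  induction k with
  | zero => dsimp only at hx; omega
  | succ k ih =>
    by_cases hkp : upCount V n ≤ k
    · obtain ⟨z, hz, hz'⟩ := h.exists_common_adj_of_upCount_le hn (y := ⟨k, by omega⟩)
        (y' := ⟨k + 1, hk⟩) hkp rfl
      exact (ih (by omega) hkp).trans (hz.reachable.symm.trans hz'.reachable)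
    · refine (h.adj_canonicalCover (s := 1) ?_ ?_ ?_ ?_ ?_).reachable <;>
        (try dsimp only at hx ⊢) <;> omega

lemma oneFactor_canonicalCover (hn : 0 < n) : (canonicalCover n V W h.upCount_eq).OneFactor := by
  refine (SimpleGraph.connected_iff _).mpr ⟨?_, ⟨⟨0, hn⟩⟩⟩
  rcases Nat.lt_or_ge n 2 with hn2 | hn2
  · intro u v
    rw [Fin.ext (by omega : (u : ℕ) = v)]
  have hreach (x : Fin n) :
      (canonicalCover n V W h.upCount_eq).incompGraph.Reachable ⟨0, by omega⟩ x :=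
    if hx : (x : ℕ) < upCount V n then h.reachable_of_lt_upCount hn2 x hx
    else h.reachable_of_upCount_le hn2 x (not_lt.mp hx)
  exact fun u v => (hreach u).symm.trans (hreach v)

end IsNonHitting

open TwoChainCover in
/-- The map `Γ`, sending a one-factor two-chain cover with greedy pair `(λ, δ)` to the
pair of walks `(V, W)` stepping up at time `i` iff `λ_i ∈ A` (resp. `δ_i ∈ A`), is a
bijection from unlabeled one-factor two-chain covers on `n` elements onto the set of
non-hitting pairs of walks of length `n`: it lands in the non-hitting pairs, every
non-hitting pair is attained, and two one-factor covers have the same image if and only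
if they are isomorphic. -/
theorem gamma_bijection (n : ℕ) (hn : 0 < n) :
    (∀ (C : TwoChainCover n) (lam del : Fin n ≃ Fin n),
      C.OneFactor → C.GreedyPair lam del → IsNonHitting n (C.walk lam) (C.walk del)) ∧
    (∀ V W : ℕ → ℤ, IsNonHitting n V W →
      ∃ (C : TwoChainCover n) (lam del : Fin n ≃ Fin n),
        C.OneFactor ∧ C.GreedyPair lam del ∧
          ∀ t ≤ n, C.walk lam t = V t ∧ C.walk del t = W t) ∧
    (∀ (C C' : TwoChainCover n) (lam del lam' del' : Fin n ≃ Fin n),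
      C.OneFactor → C'.OneFactor → C.GreedyPair lam del → C'.GreedyPair lam' del' →
      ((∀ t, C.walk lam t = C'.walk lam' t ∧ C.walk del t = C'.walk del' t) ↔
        CoverIso C C')) := by
  refine ⟨fun C lam del hC hg => hg.isNonHitting_walk hC, fun V W h => ?_,
    fun C C' lam del lam' del' _ _ hg hg' => ⟨fun hw => ?_, fun hiso t => ?_⟩⟩
  · exact ⟨canonicalCover n V W h.upCount_eq, stepPerm n V, stepPerm n W,
      h.oneFactor_canonicalCover hn, h.greedyPair_canonicalCover,
      fun t ht => h.walk_canonicalCover ht⟩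
  · exact coverIso_of_walk_eq hg hg' (funext fun t => (hw t).1) (funext fun t => (hw t).2)
  · obtain ⟨hlam, hdel⟩ := walk_eq_walk_of_coverIso hg hg' hiso
    exact ⟨congrFun hlam t, congrFun hdel t⟩
end

section
/- Let (V,W) be a pair of non-hitting walks of length n arising from a two-chain cover C=(A,B,≺), and define τ(c)=|{y : y ⪯_C c}| for c∈[n]. Then for each time 1≤t≤n, the number of elements c∈[n] with τ(c)=t equals: 1 if the t-th increments of V and W are equal; 2 if (π_t(V),π_t(W))=(+1,−1); and 0 if (π_t(V),π_t(W))=(−1,+1). -/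
open scoped Classical

/-! In a greedy pair, an element of `A` is preceded in `λ` only by elements below it: an
incomparable element of `B` comes after it in `λ`. Symmetrically an element of `B` is
preceded in `δ` only by elements below it. Hence `τ(c) - 1` is the position of `c` in `λ`
for `c ∈ A`, and in `δ` for `c ∈ B`, so the elements with `τ(c) = i + 1` are `λ i` if it
lies in `A` and `δ i` if it lies in `B`. -/

lemma Equiv.card_filter_le_fin {α : Type*} [Fintype α] {n : ℕ} (e : α ≃ Fin n) (k : Fin n) :
    (Finset.univ.filter fun y => e y ≤ k).card = (k : ℕ) + 1 := by
  have h : (Finset.univ.filter fun y => e y ≤ k) = (Finset.Iic k).map e.symm.toEmbedding := by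
    ext y
    simp only [Finset.mem_filter, Finset.mem_univ, true_and, Finset.mem_map, Finset.mem_Iic,
      Equiv.coe_toEmbedding]
    exact ⟨fun h => ⟨_, h, e.symm_apply_apply y⟩, by rintro ⟨a, ha, rfl⟩; simpa using ha⟩
  rw [h, Finset.card_map, Fin.card_Iic]

namespace TwoChainCover

variable {n : ℕ} (C : TwoChainCover n)

lemma tau_eq_of_forall_symm_lt {e : Fin n ≃ Fin n} (he : ∀ x y, C.lt x y → e.symm x < e.symm y)
    {c : Fin n} (hc : ∀ y, e.symm y < e.symm c → C.lt y c) :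
    C.tau c = (e.symm c : ℕ) + 1 := by
  rw [tau, ← e.symm.card_filter_le_fin (e.symm c)]
  congr 1
  ext y
  simp only [Finset.mem_filter, Finset.mem_univ, true_and]
  constructor
  · rintro (hy | rfl)
    · exact (he _ _ hy).le
    · exact le_rfl
  · intro hy
    rcases hy.lt_or_eq with hy | hy
    · exact Or.inl (hc y hy)
    · exact Or.inr (e.symm.injective hy)

variable {C} {lam del : Fin n ≃ Fin n}

lemma GreedyPair.lt_of_symm_lt_left (hg : C.GreedyPair lam del) {a y : Fin n} (ha : a ∈ C.A)
    (hy : lam.symm y < lam.symm a) : C.lt y a := by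
  obtain ⟨hlam, -, hgreedy⟩ := hg
  have hya : y ≠ a := by rintro rfl; exact hy.false
  by_contra hlt
  have hgt : ¬C.lt a y := fun h => (hlam _ _ h).asymm hy
  by_cases hyA : y ∈ C.A
  · exact (C.chainA y hyA a ha hya).elim hlt hgt
  · exact (hgreedy a ha y hyA hgt hlt).1.asymm hy

lemma GreedyPair.lt_of_symm_lt_right (hg : C.GreedyPair lam del) {b y : Fin n} (hb : b ∉ C.A)
    (hy : del.symm y < del.symm b) : C.lt y b := by
  obtain ⟨-, hdel, hgreedy⟩ := hg
  have hyb : y ≠ b := by rintro rfl; exact hy.false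
  by_contra hlt
  have hgt : ¬C.lt b y := fun h => (hdel _ _ h).asymm hy
  by_cases hyA : y ∈ C.A
  · exact (hgreedy y hyA b hb hlt hgt).2.asymm hy
  · exact (C.chainB y b hyA hb hyb).elim hlt hgt

lemma GreedyPair.tau_eq_iff (hg : C.GreedyPair lam del) (c : Fin n) (i : Fin n) :
    C.tau c = (i : ℕ) + 1 ↔ c ∈ C.A ∧ c = lam i ∨ c ∉ C.A ∧ c = del i := by
  by_cases hc : c ∈ C.A
  · rw [C.tau_eq_of_forall_symm_lt hg.1 fun y => hg.lt_of_symm_lt_left hc]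
    simp [hc, Fin.val_inj, Equiv.symm_apply_eq]
  · rw [C.tau_eq_of_forall_symm_lt hg.2.1 fun y => hg.lt_of_symm_lt_right hc]
    simp [hc, Fin.val_inj, Equiv.symm_apply_eq]

end TwoChainCover

open TwoChainCover in
theorem card_tau_fiber_general (n : ℕ) (C : TwoChainCover n)
    (lam del : Fin n ≃ Fin n) (hg : C.GreedyPair lam del) :
    ∀ i : Fin n,
      (Finset.univ.filter fun c : Fin n => C.tau c = (i : ℕ) + 1).card =
        if lam i ∈ C.A ↔ del i ∈ C.A then 1
        else if lam i ∈ C.A then 2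
        else 0 := by
  intro i
  simp_rw [hg.tau_eq_iff]
  by_cases hlam : lam i ∈ C.A <;> by_cases hdel : del i ∈ C.A
  · rw [if_pos (iff_of_true hlam hdel), Finset.card_eq_one]
    exact ⟨lam i, by ext c; grind⟩
  · have hne : lam i ≠ del i := by intro h; exact hdel (h ▸ hlam)
    rw [if_neg (by simp [hlam, hdel]), if_pos hlam, ← Finset.card_pair hne]
    congr 1
    ext c; grind
  · rw [if_neg (by simp [hlam, hdel]), if_neg hlam, Finset.card_eq_zero]
    ext c; grind
  · rw [if_pos (iff_of_false hlam hdel), Finset.card_eq_one]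
    exact ⟨del i, by ext c; grind⟩

open TwoChainCover in
/-- Let `C = (A, B, ≺)` be a one-factor two-chain cover with greedy pair `(λ, δ)` and
associated non-hitting walks `(V, W)`, and let `τ(c) = |{y : y ⪯_C c}|`.  Then for each
time `t = i + 1` (with `1 ≤ t ≤ n`), the number of elements `c` with `τ(c) = t` equals
`1` if the `t`-th increments of `V` and `W` agree, `2` if they are `(+1, -1)`, and `0`
if they are `(-1, +1)`. -/
theorem card_tau_fiber (n : ℕ) (C : TwoChainCover n)
    (lam del : Fin n ≃ Fin n) (h1 : C.OneFactor) (hg : C.GreedyPair lam del) :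
    ∀ i : Fin n,
      (Finset.univ.filter fun c : Fin n => C.tau c = (i : ℕ) + 1).card =
        if lam i ∈ C.A ↔ del i ∈ C.A then 1
        else if lam i ∈ C.A then 2
        else 0 :=
  card_tau_fiber_general n C lam del hg
end
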